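/- Assume joint-consistency for (s,a) ∈ {(0,0),(0,2),(1,0)}; trial exchangeability over A for (1,0) with trial positivity for a=0; external exchangeability over A for (0,0) and (0,2) with external positivity for a=0,2; external-source positivity; transportability of conditional relative effects under s=0: E[Y^{0,2}|X=x,S=1]/E[Y^{0,0}|X=x,S=1] = E[Y^{0,2}|X=x,S=0]/E[Y^{0,0}|X=x,S=0]; and no causal interaction between S and A on the ratio scale: E[Y^{1,2}|X=x,S=1]/E[Y^{1,0}|X=x,S=1] = E[Y^{0,2}|X=x,S=1]/E[Y^{0,0}|X=x,S=1], both for every x with P(X=x,S=1)>0 and P(X=x,S=0)>0, with all stated conditional means nonzero. Then E[Y^{1,2} | S=1] = ρ := Σ_x E[Y|X=x,S=1,A=0]·(E[Y|X=x,S=0,A=2]/E[Y|X=x,S=0,A=0])·P(X=x|S=1). -/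

import Mathlib

open Finset
open scoped Classical

noncomputable def pr {Ω : Type*} [Fintype Ω] (P : Ω → ℝ) (E : Ω → Prop) : ℝ :=
  ∑ ω, if E ω then P ω else 0

noncomputable def cexp {Ω : Type*} [Fintype Ω] (P : Ω → ℝ) (Y : Ω → ℝ) (E : Ω → Prop) : ℝ :=
  (∑ ω, if E ω then Y ω * P ω else 0) / pr P E

noncomputable def cpr {Ω : Type*} [Fintype Ω] (P : Ω → ℝ) (E F : Ω → Prop) : ℝ :=
  pr P (fun ω => E ω ∧ F ω) / pr P F

/-! Fix a stratum `X = x` of the trial population; by external positivity it also occurs in the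
external population, so the stratum-wise assumptions apply. No interaction followed by
transportability gives
`E[Y^{1,2} | x, S=1] / E[Y^{1,0} | x, S=1] = E[Y^{0,2} | x, S=0] / E[Y^{0,0} | x, S=0]`,
and exchangeability plus consistency identify `E[Y^{1,0} | x, S=1]` and both external means with
observed arm means. Averaging over `X` within `S = 1` (law of total expectation) gives `ρ`. -/

section FiniteProbability

variable {Ω : Type*} [Fintype Ω] {P : Ω → ℝ}

lemma pr_nonneg (hP : ∀ ω, 0 ≤ P ω) (E : Ω → Prop) : 0 ≤ pr P E :=
  sum_nonneg fun ω _ => ite_nonneg (hP ω) le_rfl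

lemma pr_and_pos_of_cpr_pos (hP : ∀ ω, 0 ≤ P ω) {E F : Ω → Prop} (h : 0 < cpr P E F) :
    0 < pr P (fun ω => F ω ∧ E ω) := by
  have hEF : pr P (fun ω => E ω ∧ F ω) ≠ 0 := fun h0 => by simp [cpr, h0] at h
  rw [show (fun ω => F ω ∧ E ω) = fun ω => E ω ∧ F ω from funext fun _ => propext and_comm]
  exact (pr_nonneg hP _).lt_of_ne' hEF

lemma cexp_congr_fun {Y Z : Ω → ℝ} {E : Ω → Prop} (h : ∀ ω, E ω → Y ω = Z ω) :
    cexp P Y E = cexp P Z E := by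
  unfold cexp
  congr 1
  refine sum_congr rfl fun ω _ => ?_
  split_ifs with hω
  · rw [h ω hω]
  · rfl

/-- Holds without positivity: if `pr P E = 0`, then `P` vanishes on `E`. -/
lemma cexp_mul_pr (hP : ∀ ω, 0 ≤ P ω) (Y : Ω → ℝ) (E : Ω → Prop) :
    cexp P Y E * pr P E = ∑ ω, if E ω then Y ω * P ω else 0 := by
  by_cases h : pr P E = 0
  · rw [h, mul_zero]
    have hPE := (sum_eq_zero_iff_of_nonneg fun ω _ => ite_nonneg (hP ω) le_rfl).1 h
    refine (sum_eq_zero fun ω hω => ?_).symm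
    have hPω := hPE ω hω
    split_ifs at hPω ⊢
    · rw [hPω, mul_zero]
    · rfl
  · exact div_mul_cancel₀ _ h

lemma cexp_eq_sum_cexp_mul_cpr {α : Type*} [Fintype α] (hP : ∀ ω, 0 ≤ P ω) (X : Ω → α)
    (Y : Ω → ℝ) (E : Ω → Prop) :
    cexp P Y E = ∑ x, cexp P Y (fun ω => X ω = x ∧ E ω) * cpr P (fun ω => X ω = x) E := by
  simp only [cpr, ← mul_div_assoc, ← sum_div, cexp_mul_pr hP]
  rw [cexp, ← sum_fiberwise univ X]
  simp only [sum_filter]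
  congr 1
  refine sum_congr rfl fun x _ => sum_congr rfl fun ω _ => ?_
  by_cases hx : X ω = x <;> simp [hx]

end FiniteProbability

theorem stmt13_general    {Ω 𝓧 : Type*} [Fintype Ω] [Fintype 𝓧]
    (P : Ω → ℝ) (hP : ∀ ω, 0 ≤ P ω)
    (X : Ω → 𝓧) (S : Ω → ℕ) (A : Ω → ℕ) (Y : Ω → ℝ)
    (Y00 Y02 Y10 Y12 : Ω → ℝ)
    (hcons00 : ∀ ω, S ω = 0 → A ω = 0 → Y00 ω = Y ω)
    (hcons02 : ∀ ω, S ω = 0 → A ω = 2 → Y02 ω = Y ω)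
    (hcons10 : ∀ ω, S ω = 1 → A ω = 0 → Y10 ω = Y ω)
    (hexch10 : ∀ x, 0 < pr P (fun ω => X ω = x ∧ S ω = 1) → cexp P Y10 (fun ω => X ω = x ∧ S ω = 1) = cexp P Y10 (fun ω => X ω = x ∧ S ω = 1 ∧ A ω = 0))
    (hexch00 : ∀ x, 0 < pr P (fun ω => X ω = x ∧ S ω = 0) → cexp P Y00 (fun ω => X ω = x ∧ S ω = 0) = cexp P Y00 (fun ω => X ω = x ∧ S ω = 0 ∧ A ω = 0))
    (hexch02 : ∀ x, 0 < pr P (fun ω => X ω = x ∧ S ω = 0) → cexp P Y02 (fun ω => X ω = x ∧ S ω = 0) = cexp P Y02 (fun ω => X ω = x ∧ S ω = 0 ∧ A ω = 2))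
    (hextpos : ∀ x, 0 < pr P (fun ω => X ω = x ∧ S ω = 1) → 0 < cpr P (fun ω => S ω = 0) (fun ω => X ω = x))
    (htransratio : ∀ x, 0 < pr P (fun ω => X ω = x ∧ S ω = 1) → 0 < pr P (fun ω => X ω = x ∧ S ω = 0) →
      cexp P Y02 (fun ω => X ω = x ∧ S ω = 1) / cexp P Y00 (fun ω => X ω = x ∧ S ω = 1) =
      cexp P Y02 (fun ω => X ω = x ∧ S ω = 0) / cexp P Y00 (fun ω => X ω = x ∧ S ω = 0))
    (hnointer : ∀ x, 0 < pr P (fun ω => X ω = x ∧ S ω = 1) → 0 < pr P (fun ω => X ω = x ∧ S ω = 0) →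
      cexp P Y12 (fun ω => X ω = x ∧ S ω = 1) / cexp P Y10 (fun ω => X ω = x ∧ S ω = 1) =
      cexp P Y02 (fun ω => X ω = x ∧ S ω = 1) / cexp P Y00 (fun ω => X ω = x ∧ S ω = 1))
    (hne : ∀ x, 0 < pr P (fun ω => X ω = x ∧ S ω = 1) → 0 < pr P (fun ω => X ω = x ∧ S ω = 0) →
      cexp P Y00 (fun ω => X ω = x ∧ S ω = 1) ≠ 0 ∧ cexp P Y00 (fun ω => X ω = x ∧ S ω = 0) ≠ 0 ∧
      cexp P Y10 (fun ω => X ω = x ∧ S ω = 1) ≠ 0 ∧ cexp P Y02 (fun ω => X ω = x ∧ S ω = 0) ≠ 0 ∧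
      cexp P Y (fun ω => X ω = x ∧ S ω = 0 ∧ A ω = 0) ≠ 0)
    : cexp P Y12 (fun ω => S ω = 1) =
      ∑ x ∈ univ.filter (fun x => 0 < pr P (fun ω => X ω = x ∧ S ω = 1)),
        cexp P Y (fun ω => X ω = x ∧ S ω = 1 ∧ A ω = 0) * (cexp P Y (fun ω => X ω = x ∧ S ω = 0 ∧ A ω = 2) / cexp P Y (fun ω => X ω = x ∧ S ω = 0 ∧ A ω = 0)) * (pr P (fun ω => X ω = x ∧ S ω = 1) / pr P (fun ω => S ω = 1)) := by
  rw [cexp_eq_sum_cexp_mul_cpr hP X,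
    ← sum_filter_of_ne (p := fun x => 0 < pr P (fun ω => X ω = x ∧ S ω = 1))]
  · refine sum_congr rfl fun x hx => ?_
    have hx1 : 0 < pr P (fun ω => X ω = x ∧ S ω = 1) := (mem_filter.1 hx).2
    have hx0 : 0 < pr P (fun ω => X ω = x ∧ S ω = 0) :=
      pr_and_pos_of_cpr_pos hP (hextpos x hx1)
    have trial10 : cexp P Y10 (fun ω => X ω = x ∧ S ω = 1) =
        cexp P Y (fun ω => X ω = x ∧ S ω = 1 ∧ A ω = 0) :=
      (hexch10 x hx1).trans (cexp_congr_fun fun ω h => hcons10 ω h.2.1 h.2.2)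
    have ext00 : cexp P Y00 (fun ω => X ω = x ∧ S ω = 0) =
        cexp P Y (fun ω => X ω = x ∧ S ω = 0 ∧ A ω = 0) :=
      (hexch00 x hx0).trans (cexp_congr_fun fun ω h => hcons00 ω h.2.1 h.2.2)
    have ext02 : cexp P Y02 (fun ω => X ω = x ∧ S ω = 0) =
        cexp P Y (fun ω => X ω = x ∧ S ω = 0 ∧ A ω = 2) :=
      (hexch02 x hx0).trans (cexp_congr_fun fun ω h => hcons02 ω h.2.1 h.2.2)
    have ratio : cexp P Y12 (fun ω => X ω = x ∧ S ω = 1) /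
          cexp P Y10 (fun ω => X ω = x ∧ S ω = 1) =
        cexp P Y02 (fun ω => X ω = x ∧ S ω = 0) /
          cexp P Y00 (fun ω => X ω = x ∧ S ω = 0) :=
      (hnointer x hx1 hx0).trans (htransratio x hx1 hx0)
    rw [(div_eq_iff (hne x hx1 hx0).2.2.1).1 ratio, trial10, ext00, ext02, cpr]
    ring
  · intro x _ hx
    exact (pr_nonneg hP _).lt_of_ne' fun h0 => hx (by simp [cpr, h0])

theorem stmt13    {Ω 𝓧 : Type*} [Fintype Ω] [Fintype 𝓧]
    (P : Ω → ℝ) (hP : ∀ ω, 0 ≤ P ω) (hPsum : ∑ ω, P ω = 1)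
    (X : Ω → 𝓧) (S : Ω → ℕ) (A : Ω → ℕ) (Y : Ω → ℝ)
    (Y00 Y02 Y10 Y12 : Ω → ℝ)
    (hS1 : 0 < pr P (fun ω => S ω = 1))
    (hcons00 : ∀ ω, S ω = 0 → A ω = 0 → Y00 ω = Y ω)
    (hcons02 : ∀ ω, S ω = 0 → A ω = 2 → Y02 ω = Y ω)
    (hcons10 : ∀ ω, S ω = 1 → A ω = 0 → Y10 ω = Y ω)
    (hexch10 : ∀ x, 0 < pr P (fun ω => X ω = x ∧ S ω = 1) → cexp P Y10 (fun ω => X ω = x ∧ S ω = 1) = cexp P Y10 (fun ω => X ω = x ∧ S ω = 1 ∧ A ω = 0))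
    (hpos0 : ∀ x, 0 < pr P (fun ω => X ω = x ∧ S ω = 1) → 0 < cpr P (fun ω => A ω = 0) (fun ω => X ω = x ∧ S ω = 1))
    (hexch00 : ∀ x, 0 < pr P (fun ω => X ω = x ∧ S ω = 0) → cexp P Y00 (fun ω => X ω = x ∧ S ω = 0) = cexp P Y00 (fun ω => X ω = x ∧ S ω = 0 ∧ A ω = 0))
    (hexch02 : ∀ x, 0 < pr P (fun ω => X ω = x ∧ S ω = 0) → cexp P Y02 (fun ω => X ω = x ∧ S ω = 0) = cexp P Y02 (fun ω => X ω = x ∧ S ω = 0 ∧ A ω = 2))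
    (hposext0 : ∀ x, 0 < pr P (fun ω => X ω = x ∧ S ω = 0) → 0 < cpr P (fun ω => A ω = 0) (fun ω => X ω = x ∧ S ω = 0))
    (hposext2 : ∀ x, 0 < pr P (fun ω => X ω = x ∧ S ω = 0) → 0 < cpr P (fun ω => A ω = 2) (fun ω => X ω = x ∧ S ω = 0))
    (hextpos : ∀ x, 0 < pr P (fun ω => X ω = x ∧ S ω = 1) → 0 < cpr P (fun ω => S ω = 0) (fun ω => X ω = x))
    (htransratio : ∀ x, 0 < pr P (fun ω => X ω = x ∧ S ω = 1) → 0 < pr P (fun ω => X ω = x ∧ S ω = 0) →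
      cexp P Y02 (fun ω => X ω = x ∧ S ω = 1) / cexp P Y00 (fun ω => X ω = x ∧ S ω = 1) =
      cexp P Y02 (fun ω => X ω = x ∧ S ω = 0) / cexp P Y00 (fun ω => X ω = x ∧ S ω = 0))
    (hnointer : ∀ x, 0 < pr P (fun ω => X ω = x ∧ S ω = 1) → 0 < pr P (fun ω => X ω = x ∧ S ω = 0) →
      cexp P Y12 (fun ω => X ω = x ∧ S ω = 1) / cexp P Y10 (fun ω => X ω = x ∧ S ω = 1) =
      cexp P Y02 (fun ω => X ω = x ∧ S ω = 1) / cexp P Y00 (fun ω => X ω = x ∧ S ω = 1))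
    (hne : ∀ x, 0 < pr P (fun ω => X ω = x ∧ S ω = 1) → 0 < pr P (fun ω => X ω = x ∧ S ω = 0) →
      cexp P Y00 (fun ω => X ω = x ∧ S ω = 1) ≠ 0 ∧ cexp P Y00 (fun ω => X ω = x ∧ S ω = 0) ≠ 0 ∧
      cexp P Y10 (fun ω => X ω = x ∧ S ω = 1) ≠ 0 ∧ cexp P Y02 (fun ω => X ω = x ∧ S ω = 0) ≠ 0 ∧
      cexp P Y (fun ω => X ω = x ∧ S ω = 0 ∧ A ω = 0) ≠ 0)
    : cexp P Y12 (fun ω => S ω = 1) =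
      ∑ x ∈ univ.filter (fun x => 0 < pr P (fun ω => X ω = x ∧ S ω = 1)),
        cexp P Y (fun ω => X ω = x ∧ S ω = 1 ∧ A ω = 0) * (cexp P Y (fun ω => X ω = x ∧ S ω = 0 ∧ A ω = 2) / cexp P Y (fun ω => X ω = x ∧ S ω = 0 ∧ A ω = 0)) * (pr P (fun ω => X ω = x ∧ S ω = 1) / pr P (fun ω => S ω = 1)) :=
  stmt13_general P hP X S A Y Y00 Y02 Y10 Y12 hcons00 hcons02 hcons10 hexch10 hexch00 hexch02
    hextpos htransratio hnointer hne
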